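/- arXiv:1901.07515 — 2 statements merged into one kernel-verified Lean document; each statement's English description precedes it below -/
import Mathlib

section
/- For every n ≥ 1 and x ∈ [0,1], the normalized third absolute central binomial moment satisfies n^{-3} ∑_{k=0}^{n} |k - n x|^3 C(n,k) x^k (1-x)^{n-k} ≤ 2 δ_n(x)^2 Δ_n(x), where δ_n(x) = √(x(1-x)/n) and Δ_n(x) = max{1/n, δ_n(x)}. -/
/-!
The factorial moments of the binomial distribution are `∑ₖ k^(j) p_{n,k}(x) = n^(j) x^j`, from
which the central moments `T₂ = n q` and `T₄ = n q (1 + 3 (n - 2) q)` follow, `q = x (1 - x)`.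
Cauchy–Schwarz gives `T₃² ≤ T₂ T₄ ≤ n² q² (1 + 3 n q)`, and `1 ≤ n Δ`, `q ≤ n Δ²` bound
`1 + 3 n q` by `4 n² Δ²`, so `T₃ ≤ 2 n² q Δ`.
-/

open Finset

section BinomialMoments

variable {R : Type*} [CommRing R]

def binomialWeight (n k : ℕ) (x : R) : R := n.choose k * x ^ k * (1 - x) ^ (n - k)

theorem sum_binomialWeight (n : ℕ) (x : R) : ∑ k ∈ range (n + 1), binomialWeight n k x = 1 := by
  have h := add_pow x (1 - x) n
  rw [add_sub_cancel, one_pow] at h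
  rw [h]
  exact sum_congr rfl fun k _ => by rw [binomialWeight]; ring

theorem succ_descFactorial_succ_mul_binomialWeight (m i j : ℕ) (x : R) :
    ((i + 1).descFactorial (j + 1) : R) * binomialWeight (m + 1) (i + 1) x
      = (m + 1) * x * (i.descFactorial j * binomialWeight m i x) := by
  have absorb := congrArg (Nat.cast (R := R)) (Nat.add_one_mul_choose_eq m i)
  push_cast at absorb
  simp only [binomialWeight, Nat.succ_descFactorial_succ, Nat.add_sub_add_right]
  push_cast
  linear_combination -(i.descFactorial j : R) * x ^ (i + 1) * (1 - x) ^ (m - i) * absorb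

theorem sum_descFactorial_mul_binomialWeight (j n : ℕ) (x : R) :
    ∑ k ∈ range (n + 1), (k.descFactorial j : R) * binomialWeight n k x
      = n.descFactorial j * x ^ j := by
  induction j generalizing n with
  | zero => simp [sum_binomialWeight]
  | succ j ih =>
    cases n with
    | zero => simp
    | succ m =>
      rw [sum_range_succ', Nat.zero_descFactorial_succ, Nat.cast_zero, zero_mul, add_zero]
      simp only [succ_descFactorial_succ_mul_binomialWeight]
      rw [← mul_sum, ih, Nat.succ_descFactorial_succ]
      push_cast
      ring

theorem Nat.cast_descFactorial_eq_prod_range (k j : ℕ) :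
    (k.descFactorial j : R) = ∏ i ∈ range j, ((k : R) - i) := by
  rw [← descPochhammer_eval_eq_descFactorial, descPochhammer_eval_eq_prod_range]

theorem sum_sq_sub_mul_binomialWeight (n : ℕ) (x : R) :
    ∑ k ∈ range (n + 1), ((k : R) - n * x) ^ 2 * binomialWeight n k x = n * (x * (1 - x)) := by
  have expand : ∀ k : ℕ, ((k : R) - n * x) ^ 2 = k.descFactorial 2
      + (1 - 2 * n * x) * k.descFactorial 1 + (n * x) ^ 2 * k.descFactorial 0 := by
    intro k
    simp only [Nat.cast_descFactorial_eq_prod_range, prod_range_succ, prod_range_zero]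
    ring
  simp only [expand, add_mul, mul_assoc, sum_add_distrib, ← mul_sum,
    sum_descFactorial_mul_binomialWeight]
  simp only [Nat.cast_descFactorial_eq_prod_range, prod_range_succ, prod_range_zero]
  ring

theorem sum_pow_four_sub_mul_binomialWeight (n : ℕ) (x : R) :
    ∑ k ∈ range (n + 1), ((k : R) - n * x) ^ 4 * binomialWeight n k x
      = n * (x * (1 - x)) * (1 + 3 * (n - 2) * (x * (1 - x))) := by
  have expand : ∀ k : ℕ, ((k : R) - n * x) ^ 4 = k.descFactorial 4
      + (6 - 4 * n * x) * k.descFactorial 3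
      + (7 - 12 * n * x + 6 * (n * x) ^ 2) * k.descFactorial 2
      + (1 - 4 * n * x + 6 * (n * x) ^ 2 - 4 * (n * x) ^ 3) * k.descFactorial 1
      + (n * x) ^ 4 * k.descFactorial 0 := by
    intro k
    simp only [Nat.cast_descFactorial_eq_prod_range, prod_range_succ, prod_range_zero]
    ring
  simp only [expand, add_mul, mul_assoc, sum_add_distrib, ← mul_sum,
    sum_descFactorial_mul_binomialWeight]
  simp only [Nat.cast_descFactorial_eq_prod_range, prod_range_succ, prod_range_zero]
  ring

end BinomialMoments

theorem sq_sum_abs_pow_three_mul_le {ι R : Type*} [CommRing R] [LinearOrder R]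
    [IsStrictOrderedRing R] (s : Finset ι) (a w : ι → R) (hw : ∀ i ∈ s, 0 ≤ w i) :
    (∑ i ∈ s, |a i| ^ 3 * w i) ^ 2 ≤ (∑ i ∈ s, a i ^ 2 * w i) * ∑ i ∈ s, a i ^ 4 * w i := by
  refine sum_sq_le_sum_mul_sum_of_sq_le_mul s (fun i hi => mul_nonneg (sq_nonneg _) (hw i hi))
    (fun i hi => mul_nonneg (by positivity) (hw i hi)) fun i _ => le_of_eq ?_
  rw [mul_pow, ← pow_mul, Even.pow_abs ⟨3, rfl⟩]
  ring

section ThirdMoment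

variable {R : Type*} [CommRing R] [LinearOrder R] [IsStrictOrderedRing R]

theorem binomialWeight_nonneg {x : R} (hx : x ∈ Set.Icc 0 1) (n k : ℕ) :
    0 ≤ binomialWeight n k x := by
  have : 0 ≤ 1 - x := sub_nonneg.mpr hx.2
  have := hx.1
  unfold binomialWeight
  positivity

theorem sum_abs_pow_three_mul_binomialWeight_le {n : ℕ} {x D : R} (hx : x ∈ Set.Icc 0 1)
    (hnD : 1 ≤ n * D) (hqD : x * (1 - x) ≤ n * D ^ 2) :
    ∑ k ∈ range (n + 1), |(k : R) - n * x| ^ 3 * binomialWeight n k x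
      ≤ 2 * n ^ 2 * (x * (1 - x)) * D := by
  have hq : 0 ≤ x * (1 - x) := mul_nonneg hx.1 (sub_nonneg.mpr hx.2)
  have hD : 0 ≤ D := by nlinarith [(n.cast_nonneg : (0 : R) ≤ n)]
  refine le_of_pow_le_pow_left₀ two_ne_zero (by positivity) ?_
  have h4 : 1 + 3 * (n - 2) * (x * (1 - x)) ≤ 4 * (n * D) ^ 2 := by nlinarith
  calc _ ≤ (n * (x * (1 - x))) * (n * (x * (1 - x)) * (1 + 3 * (n - 2) * (x * (1 - x)))) := by
        rw [← sum_pow_four_sub_mul_binomialWeight, ← sum_sq_sub_mul_binomialWeight]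
        exact sq_sum_abs_pow_three_mul_le _ _ _ fun k _ => binomialWeight_nonneg hx n k
    _ ≤ (n * (x * (1 - x))) ^ 2 * (4 * (n * D) ^ 2) := by
        rw [← mul_assoc, ← sq]
        exact mul_le_mul_of_nonneg_left h4 (sq_nonneg _)
    _ = (2 * n ^ 2 * (x * (1 - x)) * D) ^ 2 := by ring

end ThirdMoment

/-- Normalized third absolute central binomial moment bound:
`n⁻³ ∑_k |k - n x|³ p_{n,k}(x) ≤ 2 δ_n(x)² Δ_n(x)`, where
`δ_n(x) = √(x(1-x)/n)` and `Δ_n(x) = max (1/n) (δ_n(x))`. -/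
theorem binomial_third_abs_moment_bound (n : ℕ) (hn : 1 ≤ n) (x : ℝ)
    (hx : x ∈ Set.Icc (0:ℝ) 1) :
    (∑ k ∈ Finset.range (n + 1),
        |(k : ℝ) - n * x| ^ 3 * (n.choose k : ℝ) * x ^ k * (1 - x) ^ (n - k)) / (n : ℝ) ^ 3
      ≤ 2 * (Real.sqrt (x * (1 - x) / n)) ^ 2 *
          (max (1 / (n : ℝ)) (Real.sqrt (x * (1 - x) / n))) := by
  have hn0 : (0 : ℝ) < n := by exact_mod_cast hn
  have hq : 0 ≤ x * (1 - x) := mul_nonneg hx.1 (sub_nonneg.mpr hx.2)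
  set D := max (1 / (n : ℝ)) √(x * (1 - x) / n)
  have hnD : 1 ≤ n * D := by
    rw [← div_le_iff₀' hn0]
    exact le_max_left _ _
  have hqD : x * (1 - x) ≤ n * D ^ 2 := by
    have := pow_le_pow_left₀ (Real.sqrt_nonneg _) (le_max_right (1 / (n : ℝ)) √(x * (1 - x) / n)) 2
    rwa [Real.sq_sqrt (by positivity), div_le_iff₀' hn0] at this
  have hT := sum_abs_pow_three_mul_binomialWeight_le hx hnD hqD
  simp only [binomialWeight, ← mul_assoc] at hT
  rw [Real.sq_sqrt (by positivity), div_le_iff₀ (by positivity)]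
  calc _ ≤ 2 * n ^ 2 * x * (1 - x) * D := hT
    _ = 2 * (x * (1 - x) / n) * D * n ^ 3 := by field_simp
end

section
/- Let f be a C² function on [0,1] with |f''(t)| ≤ M for all t. Then for every x ∈ [0,1] and n ≥ 1, the Bernstein polynomial satisfies |f(x) − B_n f(x)| ≤ (M/2) · x(1−x)/n. -/
/-!
The Bernstein weights `b_{n,k}(x)` form a probability distribution on the nodes `k/n` with mean
`x` and variance `x(1-x)/n`. Since they sum to one and have mean `x`, subtracting the tangent
line of `f` at `x` does not change `f x - B_n f x`; by Taylor's theorem with Lagrange remainder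
what is left is bounded termwise by `M/2 * (k/n - x)^2`, and summing gives the variance.
-/

open Set

theorem Convex.abs_sub_sub_derivWithin_mul_le {f : ℝ → ℝ} {s : Set ℝ} {M x y : ℝ}
    (hs : Convex ℝ s) (hf : ContDiffOn ℝ 2 f s)
    (hM : ∀ t ∈ s, |iteratedDerivWithin 2 f s t| ≤ M) (hx : x ∈ s) (hy : y ∈ s) :
    |f y - f x - derivWithin f s x * (y - x)| ≤ M / 2 * (y - x) ^ 2 := by
  rcases eq_or_ne x y with rfl | hxy
  · simp
  have hsub : uIcc x y ⊆ s := hs.ordConnected.uIcc_subset hx hy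
  have hIoo : uIoo x y ⊆ interior s :=
    (interior_mono hsub).trans' (by simp [uIoo, uIcc, interior_Icc])
  obtain ⟨ξ, hξ, hlagrange⟩ :=
    taylor_mean_remainder_lagrange_iteratedDeriv (n := 1) hxy (hf.mono hsub)
  have hs' : UniqueDiffOn ℝ s := uniqueDiffOn_convex hs ⟨ξ, hIoo hξ⟩
  have hderiv : derivWithin f (uIcc x y) x = derivWithin f s x :=
    derivWithin_subset hsub (uniqueDiffOn_uIcc hxy x left_mem_uIcc)
      (hf.differentiableOn two_ne_zero x hx)
  have hsecond : iteratedDeriv 2 f ξ = iteratedDerivWithin 2 f s ξ :=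
    (iteratedDerivWithin_eq_iteratedDeriv hs'
      (hf.contDiffAt (mem_interior_iff_mem_nhds.1 (hIoo hξ))) (interior_subset (hIoo hξ))).symm
  have htaylor : f y - f x - derivWithin f s x * (y - x) =
      iteratedDerivWithin 2 f s ξ / 2 * (y - x) ^ 2 := by
    simp only [taylorWithinEval_succ, taylor_within_zero_eval, hsecond, zero_add,
      Nat.factorial_zero, Nat.cast_one, mul_one, pow_one, iteratedDerivWithin_one, hderiv,
      smul_eq_mul, Nat.reduceAdd, Nat.factorial_two] at hlagrange
    linear_combination hlagrange
  rw [htaylor, abs_mul, abs_div, abs_two, abs_sq]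
  gcongr
  exact hM ξ (interior_subset (hIoo hξ))

namespace bernsteinPolynomial

variable {R : Type*}

theorem sum_eval [CommRing R] (n : ℕ) (x : R) :
    ∑ k ∈ Finset.range (n + 1), (bernsteinPolynomial R n k).eval x = 1 := by
  simpa [Polynomial.eval_finsetSum] using congrArg (Polynomial.eval x) (sum R n)

theorem sum_sub_mul_eval [Field R] [CharZero R] {n : ℕ} (hn : n ≠ 0) (x : R) :
    ∑ k ∈ Finset.range (n + 1), ((k : R) / n - x) * (bernsteinPolynomial R n k).eval x = 0 := by
  have hmoment : ∑ k ∈ Finset.range (n + 1), (k : R) * (bernsteinPolynomial R n k).eval x =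
      n * x := by
    simpa [Polynomial.eval_finsetSum, nsmul_eq_mul] using
      congrArg (Polynomial.eval x) (sum_smul R n)
  simp only [sub_mul, Finset.sum_sub_distrib, div_mul_eq_mul_div, ← Finset.sum_div, hmoment,
    ← Finset.mul_sum, sum_eval]
  field_simp
  ring

theorem sum_sub_sq_mul_eval [Field R] [CharZero R] {n : ℕ} (hn : n ≠ 0) (x : R) :
    ∑ k ∈ Finset.range (n + 1), ((k : R) / n - x) ^ 2 * (bernsteinPolynomial R n k).eval x =
      x * (1 - x) / n := by
  have hvar := congrArg (Polynomial.eval x) (variance R n)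
  simp only [Polynomial.eval_finsetSum, Polynomial.eval_mul, Polynomial.eval_pow,
    Polynomial.eval_sub, Polynomial.eval_X, Polynomial.eval_natCast,
    Polynomial.eval_one, nsmul_eq_mul] at hvar
  have hterm : ∀ k : ℕ, ((k : R) / n - x) ^ 2 = (n * x - k) ^ 2 / n ^ 2 := fun k => by
    field_simp
    ring
  simp only [hterm, div_mul_eq_mul_div, ← Finset.sum_div, hvar]
  field_simp

theorem eval_nonneg [Field R] [LinearOrder R] [IsStrictOrderedRing R] (n k : ℕ) {x : R}
    (hx : x ∈ Icc 0 1) : 0 ≤ (bernsteinPolynomial R n k).eval x := by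
  obtain ⟨hx0, hx1⟩ := hx
  have h1x : 0 ≤ 1 - x := sub_nonneg.2 hx1
  simp only [bernsteinPolynomial, Polynomial.eval_mul, Polynomial.eval_pow, Polynomial.eval_sub,
    Polynomial.eval_X, Polynomial.eval_one, Polynomial.eval_natCast]
  positivity

end bernsteinPolynomial

theorem abs_sub_sum_mul_le_of_quadratic_bound {ι : Type*} {t : Finset ι} {f : ℝ → ℝ}
    {w y : ι → ℝ} {x c K : ℝ}
    (hw : ∀ i ∈ t, 0 ≤ w i) (hsum : ∑ i ∈ t, w i = 1) (hmean : ∑ i ∈ t, (y i - x) * w i = 0)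
    (hf : ∀ i ∈ t, |f (y i) - f x - c * (y i - x)| ≤ K * (y i - x) ^ 2) :
    |f x - ∑ i ∈ t, f (y i) * w i| ≤ K * ∑ i ∈ t, (y i - x) ^ 2 * w i := by
  have hsplit : ∑ i ∈ t, (f (y i) - f x - c * (y i - x)) * w i =
      ∑ i ∈ t, f (y i) * w i - f x * ∑ i ∈ t, w i - c * ∑ i ∈ t, (y i - x) * w i := by
    rw [Finset.mul_sum, Finset.mul_sum, ← Finset.sum_sub_distrib, ← Finset.sum_sub_distrib]
    exact Finset.sum_congr rfl fun i _ => by ring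
  rw [hsum, hmean, mul_one, mul_zero, sub_zero] at hsplit
  rw [abs_sub_comm, ← hsplit]
  calc |∑ i ∈ t, (f (y i) - f x - c * (y i - x)) * w i|
      ≤ ∑ i ∈ t, |f (y i) - f x - c * (y i - x)| * w i := by
        refine (Finset.abs_sum_le_sum_abs _ _).trans (Finset.sum_le_sum fun i hi => ?_)
        rw [abs_mul, abs_of_nonneg (hw i hi)]
    _ ≤ ∑ i ∈ t, K * (y i - x) ^ 2 * w i :=
        Finset.sum_le_sum fun i hi => mul_le_mul_of_nonneg_right (hf i hi) (hw i hi)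
    _ = K * ∑ i ∈ t, (y i - x) ^ 2 * w i := by simp only [Finset.mul_sum, mul_assoc]

/-- Bernstein approximation of a `C²` function on `[0,1]` with `|f''| ≤ M`:
`|f(x) - B_n f(x)| ≤ (M/2) x(1-x)/n`. -/
theorem bernstein_C2_bound (f : ℝ → ℝ) (M : ℝ)
    (hf : ContDiffOn ℝ 2 f (Set.Icc (0:ℝ) 1))
    (hM : ∀ t ∈ Set.Icc (0:ℝ) 1, |iteratedDerivWithin 2 f (Set.Icc (0:ℝ) 1) t| ≤ M)
    (n : ℕ) (hn : 1 ≤ n) (x : ℝ) (hx : x ∈ Set.Icc (0:ℝ) 1) :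
    |f x - ∑ k ∈ Finset.range (n + 1),
        f ((k : ℝ) / n) * (n.choose k : ℝ) * x ^ k * (1 - x) ^ (n - k)|
      ≤ M / 2 * (x * (1 - x) / n) := by
  have hn0 : n ≠ 0 := Nat.one_le_iff_ne_zero.1 hn
  have hnodes : ∀ k ∈ Finset.range (n + 1), (k : ℝ) / n ∈ Icc (0 : ℝ) 1 := fun k hk =>
    ⟨by positivity, div_le_one_of_le₀ (by exact_mod_cast Finset.mem_range_succ_iff.1 hk)
      n.cast_nonneg⟩
  have hbernstein : ∀ k ∈ Finset.range (n + 1),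
      f ((k : ℝ) / n) * (n.choose k : ℝ) * x ^ k * (1 - x) ^ (n - k) =
        f ((k : ℝ) / n) * (bernsteinPolynomial ℝ n k).eval x := fun k _ => by
    simp [bernsteinPolynomial, mul_assoc]
  rw [Finset.sum_congr rfl hbernstein, ← bernsteinPolynomial.sum_sub_sq_mul_eval hn0 x]
  exact abs_sub_sum_mul_le_of_quadratic_bound
    (fun k _ => bernsteinPolynomial.eval_nonneg n k hx) (bernsteinPolynomial.sum_eval n x)
    (bernsteinPolynomial.sum_sub_mul_eval hn0 x)
    fun k hk => (convex_Icc 0 1).abs_sub_sub_derivWithin_mul_le hf hM hx (hnodes k hk)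
end
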